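/- A real number C is a fixed point of the map F(Z) = exp(-iα/√(|Z - i/2|² - H))·(Z - i/2) - i/2 if and only if 2C·sin(θ/2) + cos(θ/2) = 0, where θ = α/√(C² + 1/4 - H), assuming C² + 1/4 > H. -/

import Mathlib

/-
Write `w = C - i/2`, so that `w + i = conj w` and the fixed-point equation reads
`e^{-iθ} w = conj w`. Since `u = e^{-iθ/2}` is unitary, this is `u w = conj (u w)`,
i.e. `Im (u w) = 0`, and `Im (u w) = -(C sin (θ/2) + cos (θ/2) / 2)`.
-/

open Complex

open ComplexConjugate

theorem norm_ofReal_sub_I_div_two_sq (C : ℝ) : ‖(C : ℂ) - I / 2‖ ^ 2 = C ^ 2 + 1 / 4 := by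
  rw [Complex.sq_norm, normSq_apply]
  simp only [sub_re, ofReal_re, div_ofNat_re, I_re, zero_div, sub_zero, sub_im, ofReal_im,
    div_ofNat_im, I_im, zero_sub]
  ring

theorem conj_ofReal_sub_I_div_two (C : ℝ) : conj ((C : ℂ) - I / 2) = C + I / 2 := by
  simp only [map_sub, conj_ofReal, map_div₀, conj_I, map_ofNat]
  ring

theorem exp_neg_mul_I_mul_eq_conj_iff (θ : ℝ) (w : ℂ) :
    exp (-(θ * I)) * w = conj w ↔ (exp (-((θ / 2 : ℝ) * I)) * w).im = 0 := by
  set u := exp (-((θ / 2 : ℝ) * I)) with hu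
  have hsq : exp (-(θ * I)) = u ^ 2 := by
    rw [hu, ← exp_nat_mul]
    push_cast
    ring_nf
  have hconj : conj u = u⁻¹ := by
    rw [hu, ← exp_conj, ← exp_neg, map_neg, map_mul, conj_ofReal, conj_I, mul_neg]
  rw [← conj_eq_iff_im, map_mul, hconj, hsq, inv_mul_eq_iff_eq_mul₀ (exp_ne_zero _), eq_comm,
    sq, mul_assoc]

theorem im_exp_neg_mul_I_mul (φ C : ℝ) :
    (exp (-(φ * I)) * ((C : ℂ) - I / 2)).im = -(C * Real.sin φ + Real.cos φ / 2) := by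
  rw [show -(φ * I) = ((-φ : ℝ) : ℂ) * I by push_cast; ring, exp_mul_I]
  simp [← ofReal_cos, ← ofReal_sin]
  ring

theorem fixed_point_condition_general (α H C : ℝ) :
    (Complex.exp (-(I * α) / Real.sqrt (‖(C : ℂ) - I / 2‖ ^ 2 - H))
        * ((C : ℂ) - I / 2) - I / 2 = (C : ℂ))
    ↔ 2 * C * Real.sin (α / Real.sqrt (C ^ 2 + 1 / 4 - H) / 2)
        + Real.cos (α / Real.sqrt (C ^ 2 + 1 / 4 - H) / 2) = 0 := by
  set θ := α / Real.sqrt (C ^ 2 + 1 / 4 - H) with hθ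
  have hexponent : -(I * α) / Real.sqrt (‖(C : ℂ) - I / 2‖ ^ 2 - H) = -(θ * I) := by
    rw [norm_ofReal_sub_I_div_two_sq, hθ, ofReal_div]
    ring
  rw [hexponent, sub_eq_iff_eq_add, ← conj_ofReal_sub_I_div_two, exp_neg_mul_I_mul_eq_conj_iff,
    im_exp_neg_mul_I_mul]
  constructor <;> intro h <;> linarith

/-- Fixed point condition for real C: 2C·sin(θ/2) + cos(θ/2) = 0 with
θ = α/√(C² + 1/4 - H). -/
theorem fixed_point_condition (α H C : ℝ) (hC : C ^ 2 + 1 / 4 - H > 0) :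
    (Complex.exp (-(I * α) / Real.sqrt (‖(C : ℂ) - I / 2‖ ^ 2 - H))
        * ((C : ℂ) - I / 2) - I / 2 = (C : ℂ))
    ↔ 2 * C * Real.sin (α / Real.sqrt (C ^ 2 + 1 / 4 - H) / 2)
        + Real.cos (α / Real.sqrt (C ^ 2 + 1 / 4 - H) / 2) = 0 :=
  fixed_point_condition_general α H C
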